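/- Let 0 < ν < 1, let ρ ∈ (0,1), and let κ > 0. There exists a constant C = C(ν) such that for every v ∈ ℝ³ with |v| ≤ ν, every 0 < σ < κ' ≤ κ, every s > 0, every x ∈ ℝ³ with |x| ≤ (1 − ρ) s, and every component index l ∈ {1,2,3}, one has |∫_{A(σ,κ')} (Σ_v(k))_l · cos(k·x − |k| s) dk| ≤ C / (ρ s); in particular the bound is uniform in the cutoffs σ and κ'. -/

import Mathlib

open MeasureTheory
open scoped RealInnerProductSpace

noncomputable section

/-- ℝ³ as a Euclidean space. -/
abbrev E3 := EuclideanSpace ℝ (Fin 3)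

/-- The closed annulus `{k : a ≤ |k| ≤ b}` in ℝ³. -/
def annulus (a b : ℝ) : Set E3 := {k | a ≤ ‖k‖ ∧ ‖k‖ ≤ b}

/-- The soft-photon velocity field
`Σ_v(k) = (2 / (|k|² (1 − (k/|k|)·v))) • (v − ((k·v)/|k|²) k)`. -/
def Sig (v k : E3) : E3 :=
  (2 / (‖k‖ ^ 2 * (1 - ⟪k, v⟫ / ‖k‖))) • (v - (⟪k, v⟫ / ‖k‖ ^ 2) • k)

/-! In polar coordinates `k = r • ω`, `Σ_v` is homogeneous of degree `-2` and the phase is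
`r (ω·x - s)`, so the Jacobian `r²` cancels and the radial integral is
`Σ_v(ω)_l ∫_σ^κ' cos (r (ω·x - s)) dr`, of size at most `2 |Σ_v(ω)| / |ω·x - s|`.
Inside the light cone `|ω·x - s| ≥ ρ s`, and `|Σ_v(ω)| ≤ 4 / (1 - ν)` on the unit sphere;
integrating over the sphere gives the bound. -/

open Set Metric

namespace MeasureTheory

variable {F : Type*} [NormedAddCommGroup F] [NormedSpace ℝ F]

theorem integral_volumeIoiPow (n : ℕ) (g : ℝ → F) :
    ∫ r, g r ∂Measure.volumeIoiPow n = ∫ r in Ioi (0 : ℝ), r ^ n • g r := by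
  simp only [Measure.volumeIoiPow, ENNReal.ofReal]
  rw [integral_withDensity_eq_integral_smul
      (measurable_subtype_coe.pow_const _).real_toNNReal,
    integral_subtype_comap measurableSet_Ioi fun r ↦ Real.toNNReal (r ^ n) • g r]
  refine setIntegral_congr_fun measurableSet_Ioi fun r hr ↦ ?_
  rw [NNReal.smul_def, Real.coe_toNNReal _ (pow_nonneg (le_of_lt hr) _)]

variable {E : Type*} [NormedAddCommGroup E] [NormedSpace ℝ E] [Nontrivial E]
  [FiniteDimensional ℝ E] [MeasurableSpace E] [BorelSpace E]
  (μ : Measure E) [μ.IsAddHaarMeasure]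

theorem integral_eq_integral_toSphere_setIntegral_Ioi {f : E → F} (hf : Integrable f μ) :
    ∫ x, f x ∂μ = ∫ ω, (∫ r in Ioi (0 : ℝ),
      r ^ (Module.finrank ℝ E - 1) • f (r • (ω : E))) ∂μ.toSphere := by
  have hmp := μ.measurePreserving_homeomorphUnitSphereProd
  have hemb := (homeomorphUnitSphereProd E).measurableEmbedding
  set G : sphere (0 : E) 1 × Ioi (0 : ℝ) → F := fun p ↦ f ((p.2 : ℝ) • (p.1 : E))
  have hG : ∀ x : ({0}ᶜ : Set E), G (homeomorphUnitSphereProd E x) = f x := fun x ↦ by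
    simp [G, smul_inv_smul₀ (norm_ne_zero_iff.2 x.2)]
  have hGint : Integrable G (μ.toSphere.prod (.volumeIoiPow (Module.finrank ℝ E - 1))) := by
    rw [← hmp.integrable_comp_emb hemb]
    simp only [Function.comp_def, hG]
    exact (integrableOn_iff_comap_subtypeVal (measurableSet_singleton 0).compl).1 hf.integrableOn
  calc ∫ x, f x ∂μ = ∫ x : ({0}ᶜ : Set E), f x ∂μ.comap (↑) := by
        rw [integral_subtype_comap (measurableSet_singleton _).compl, restrict_compl_singleton]
    _ = ∫ p, G p ∂μ.toSphere.prod (.volumeIoiPow (Module.finrank ℝ E - 1)) := by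
        simp only [← hG]
        exact hmp.integral_comp hemb G
    _ = _ := by
        rw [integral_prod G hGint]
        exact integral_congr_ae <| .of_forall fun ω ↦
          integral_volumeIoiPow _ fun r ↦ f (r • (ω : E))

end MeasureTheory

theorem mul_le_abs_inner_sub {E : Type*} [NormedAddCommGroup E] [InnerProductSpace ℝ E]
    {ω x : E} (hω : ‖ω‖ = 1) {ρ s : ℝ} (hx : ‖x‖ ≤ (1 - ρ) * s) : ρ * s ≤ |⟪ω, x⟫ - s| := by
  have := (real_inner_le_norm ω x).trans_eq (by rw [hω, one_mul])
  rw [abs_sub_comm]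
  linarith [le_abs_self (s - ⟪ω, x⟫)]

theorem Sig_smul (v k : E3) {r : ℝ} (hr : 0 < r) : Sig v (r • k) = (r ^ 2)⁻¹ • Sig v k := by
  rcases eq_or_ne k 0 with rfl | hk
  · simp [Sig]
  have hratio : ⟪r • k, v⟫ / ‖r • k‖ = ⟪k, v⟫ / ‖k‖ := by
    rw [real_inner_smul_left, norm_smul, Real.norm_of_nonneg hr.le]
    field_simp
  have hproj : (⟪r • k, v⟫ / ‖r • k‖ ^ 2) • (r • k) = (⟪k, v⟫ / ‖k‖ ^ 2) • k := by
    rw [smul_smul, real_inner_smul_left, norm_smul, Real.norm_of_nonneg hr.le]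
    congr 1
    field_simp
  rw [Sig, hratio, hproj, Sig, smul_smul, norm_smul, Real.norm_of_nonneg hr.le]
  congr 1
  -- `1 - ⟪k, v⟫ / ‖k‖` may vanish (both sides are then `0`), so it is kept opaque
  generalize 1 - ⟪k, v⟫ / ‖k‖ = D
  ring

theorem norm_Sig_le_of_norm_eq_one {v ω : E3} (hv : ‖v‖ < 1) (hω : ‖ω‖ = 1) :
    ‖Sig v ω‖ ≤ 4 / (1 - ‖v‖) := by
  have hinner : |⟪ω, v⟫| ≤ ‖v‖ := by
    simpa [hω] using abs_real_inner_le_norm ω v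
  have hden : 0 < 1 - ⟪ω, v⟫ := by linarith [le_abs_self ⟪ω, v⟫]
  have hproj : ‖v - ⟪ω, v⟫ • ω‖ ≤ 2 := by
    calc ‖v - ⟪ω, v⟫ • ω‖ ≤ ‖v‖ + |⟪ω, v⟫| := by
          simpa [norm_smul, hω] using norm_sub_le v (⟪ω, v⟫ • ω)
      _ ≤ 2 := by linarith
  simp only [Sig, hω, one_pow, one_mul, div_one, norm_smul, Real.norm_eq_abs,
    abs_of_pos (div_pos two_pos hden)]
  calc 2 / (1 - ⟪ω, v⟫) * ‖v - ⟪ω, v⟫ • ω‖ ≤ 2 / (1 - ‖v‖) * 2 := by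
        gcongr
        linarith [le_abs_self ⟪ω, v⟫]
    _ = 4 / (1 - ‖v‖) := by ring

theorem norm_Sig_le {v k : E3} (hv : ‖v‖ < 1) (hk : k ≠ 0) :
    ‖Sig v k‖ ≤ 4 / (1 - ‖v‖) / ‖k‖ ^ 2 := by
  have hk' : 0 < ‖k‖ := norm_pos_iff.2 hk
  have hω : ‖‖k‖⁻¹ • k‖ = 1 := by rw [norm_smul, norm_inv, norm_norm, inv_mul_cancel₀ hk'.ne']
  have hunit := norm_Sig_le_of_norm_eq_one hv hω
  conv_lhs => rw [← smul_inv_smul₀ hk'.ne' k, Sig_smul _ _ hk']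
  rw [norm_smul, norm_inv, norm_pow, norm_norm, inv_mul_eq_div]
  gcongr

theorem measurable_Sig (v : E3) : Measurable (Sig v) := by
  unfold Sig; fun_prop

theorem measurableSet_annulus (a b : ℝ) : MeasurableSet (annulus a b) :=
  measurable_norm measurableSet_Icc

theorem smul_mem_annulus_iff {ω : E3} (hω : ‖ω‖ = 1) {r : ℝ} (hr : 0 < r) (a b : ℝ) :
    r • ω ∈ annulus a b ↔ r ∈ Icc a b := by
  simp [annulus, norm_smul, hω, abs_of_pos hr]

theorem integrableOn_Sig_annulus {v : E3} (hv : ‖v‖ < 1) {a : ℝ} (ha : 0 < a) (b : ℝ) :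
    IntegrableOn (Sig v) (annulus a b) := by
  have hfin : volume (annulus a b) < ⊤ :=
    (measure_mono fun k hk ↦ mem_closedBall_zero_iff.2 hk.2).trans_lt measure_closedBall_lt_top
  refine .of_bound hfin (measurable_Sig v).aestronglyMeasurable (4 / (1 - ‖v‖) / a ^ 2)
    ((ae_restrict_iff' (measurableSet_annulus a b)).2 (.of_forall fun k hk ↦ ?_))
  have hk0 : k ≠ 0 := norm_pos_iff.1 (ha.trans_le hk.1)
  have := sub_pos.2 hv
  exact (norm_Sig_le hv hk0).trans (by gcongr; exact hk.1)

theorem abs_intervalIntegral_cos_mul_le (a b : ℝ) {c : ℝ} (hc : c ≠ 0) :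
    |∫ r in a..b, Real.cos (r * c)| ≤ 2 / |c| := by
  rw [intervalIntegral.integral_comp_mul_right Real.cos hc, integral_cos, smul_eq_mul,
    abs_mul, abs_inv, inv_mul_eq_div]
  gcongr
  calc |Real.sin (b * c) - Real.sin (a * c)| ≤ |Real.sin (b * c)| + |Real.sin (a * c)| :=
        abs_sub _ _
    _ ≤ 2 := by linarith [Real.abs_sin_le_one (b * c), Real.abs_sin_le_one (a * c)]

theorem sq_mul_Sig_apply_mul_cos_smul (v x : E3) {ω : E3} (hω : ‖ω‖ = 1) (l : Fin 3) (s : ℝ)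
    {r : ℝ} (hr : 0 < r) :
    r ^ 2 * ((Sig v (r • ω)) l * Real.cos (⟪r • ω, x⟫ - ‖r • ω‖ * s)) =
      (Sig v ω) l * Real.cos (r * (⟪ω, x⟫ - s)) := by
  rw [Sig_smul v ω hr, PiLp.smul_apply, smul_eq_mul, real_inner_smul_left, norm_smul, hω,
    Real.norm_of_nonneg hr.le]
  field_simp

theorem setIntegral_Ioi_smul_annulus_indicator (v x : E3) {ω : E3} (hω : ‖ω‖ = 1) (l : Fin 3)
    (s : ℝ) {a b : ℝ} (ha : 0 < a) (hab : a ≤ b) :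
    ∫ r in Ioi (0 : ℝ), r ^ 2 • (annulus a b).indicator
        (fun k ↦ (Sig v k) l * Real.cos (⟪k, x⟫ - ‖k‖ * s)) (r • ω) =
      (Sig v ω) l * ∫ r in a..b, Real.cos (r * (⟪ω, x⟫ - s)) := by
  have hradial : EqOn (fun r : ℝ ↦ r ^ 2 • (annulus a b).indicator
        (fun k ↦ (Sig v k) l * Real.cos (⟪k, x⟫ - ‖k‖ * s)) (r • ω))
      ((Icc a b).indicator fun r ↦ (Sig v ω) l * Real.cos (r * (⟪ω, x⟫ - s))) (Ioi 0) := by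
    intro r hr
    dsimp only
    by_cases hrab : r ∈ Icc a b
    · rw [indicator_of_mem ((smul_mem_annulus_iff hω hr a b).2 hrab), indicator_of_mem hrab,
        smul_eq_mul, sq_mul_Sig_apply_mul_cos_smul v x hω l s hr]
    · rw [indicator_of_notMem (mt (smul_mem_annulus_iff hω hr a b).1 hrab),
        indicator_of_notMem hrab, smul_zero]
  rw [setIntegral_congr_fun measurableSet_Ioi hradial, setIntegral_indicator measurableSet_Icc,
    inter_eq_right.2 ((Icc_subset_Ioi_iff hab).2 ha), integral_Icc_eq_integral_Ioc,
    ← intervalIntegral.integral_of_le hab, intervalIntegral.integral_const_mul]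

theorem abs_setIntegral_Ioi_smul_annulus_indicator_le {v x ω : E3} (hv : ‖v‖ < 1)
    (hω : ‖ω‖ = 1) (l : Fin 3) (s : ℝ) {a b : ℝ} (ha : 0 < a) (hab : a ≤ b) {c : ℝ}
    (hc : 0 < c) (hphase : c ≤ |⟪ω, x⟫ - s|) :
    |∫ r in Ioi (0 : ℝ), r ^ 2 • (annulus a b).indicator
        (fun k ↦ (Sig v k) l * Real.cos (⟪k, x⟫ - ‖k‖ * s)) (r • ω)| ≤
      8 / (1 - ‖v‖) / c := by
  have := sub_pos.2 hv
  rw [setIntegral_Ioi_smul_annulus_indicator v x hω l s ha hab, abs_mul]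
  calc |(Sig v ω) l| * |∫ r in a..b, Real.cos (r * (⟪ω, x⟫ - s))|
      ≤ 4 / (1 - ‖v‖) * (2 / c) := by
        gcongr
        · exact (PiLp.norm_apply_le _ l).trans (norm_Sig_le_of_norm_eq_one hv hω)
        · exact (abs_intervalIntegral_cos_mul_le _ _ (abs_pos.1 (hc.trans_le hphase))).trans
            (by gcongr)
    _ = 8 / (1 - ‖v‖) / c := by ring

theorem statement2_general (ν ρ κ : ℝ) (hν1 : ν < 1) (hρ0 : 0 < ρ) :
    ∃ C : ℝ, ∀ v : E3, ‖v‖ ≤ ν → ∀ σ κ' : ℝ, 0 < σ → σ < κ' → κ' ≤ κ →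
      ∀ s : ℝ, 0 < s → ∀ x : E3, ‖x‖ ≤ (1 - ρ) * s → ∀ l : Fin 3,
      |∫ k in annulus σ κ', (Sig v k) l * Real.cos (⟪k, x⟫ - ‖k‖ * s)| ≤
        C / (ρ * s) := by
  refine ⟨(volume : Measure E3).toSphere.real univ * (8 / (1 - ν)), ?_⟩
  intro v hv σ κ' hσ hσκ _ s hs x hx l
  have hv1 : ‖v‖ < 1 := hv.trans_lt hν1
  set F : E3 → ℝ := fun k ↦ (Sig v k) l * Real.cos (⟪k, x⟫ - ‖k‖ * s)
  have hF : IntegrableOn F (annulus σ κ') :=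
    ((EuclideanSpace.proj l : E3 →L[ℝ] ℝ).integrable_comp
      (integrableOn_Sig_annulus hv1 hσ κ')).mul_bdd (c := 1) (by fun_prop)
      (.of_forall fun k ↦ Real.abs_cos_le_one _)
  have hradial : ∀ ω : sphere (0 : E3) 1, ‖∫ r in Ioi (0 : ℝ),
      r ^ (Module.finrank ℝ E3 - 1) • (annulus σ κ').indicator F (r • (ω : E3))‖ ≤
        8 / (1 - ν) / (ρ * s) := fun ω ↦ by
    have hω : ‖(ω : E3)‖ = 1 := norm_eq_of_mem_sphere ω
    have := sub_pos.2 hν1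
    rw [finrank_euclideanSpace_fin, Real.norm_eq_abs]
    refine (abs_setIntegral_Ioi_smul_annulus_indicator_le hv1 hω l s hσ hσκ.le
      (mul_pos hρ0 hs) (mul_le_abs_inner_sub hω hx)).trans ?_
    gcongr
  rw [← integral_indicator (measurableSet_annulus σ κ'), ← Real.norm_eq_abs,
    integral_eq_integral_toSphere_setIntegral_Ioi volume
      (hF.integrable_indicator (measurableSet_annulus σ κ'))]
  calc _ ≤ 8 / (1 - ν) / (ρ * s) * (volume : Measure E3).toSphere.real univ :=
        norm_integral_le_of_norm_le_const (.of_forall hradial)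
    _ = _ := by ring

/-- Interior-of-the-light-cone estimate from the proof of Lemma A.2: for `|x| ≤ (1-ρ)s`
the oscillatory integral decays like `1/(ρ s)`, uniformly in both cutoffs. -/
theorem statement2 (ν ρ κ : ℝ) (hν0 : 0 < ν) (hν1 : ν < 1) (hρ0 : 0 < ρ) (hρ1 : ρ < 1)
    (hκ : 0 < κ) :
    ∃ C : ℝ, ∀ v : E3, ‖v‖ ≤ ν → ∀ σ κ' : ℝ, 0 < σ → σ < κ' → κ' ≤ κ →
      ∀ s : ℝ, 0 < s → ∀ x : E3, ‖x‖ ≤ (1 - ρ) * s → ∀ l : Fin 3,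
      |∫ k in annulus σ κ', (Sig v k) l * Real.cos (⟪k, x⟫ - ‖k‖ * s)| ≤
        C / (ρ * s) :=
  statement2_general ν ρ κ hν1 hρ0
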